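/- Let π be a probability measure on a measurable data space Z, let n ≥ 1, T > 0, and let ℓ : Θ × Z → ℝ be nonnegative and measurable, with Gibbs posterior densities p_D(θ) := exp(−(1/T)Σ_{z∈D} ℓ(θ,z))/∫ exp(−(1/T)Σ_{z∈D} ℓ(θ',z)) dμ(θ') well defined (finite positive normalizer) for π-almost every tuple D of the relevant lengths. Define the H₀ density L₀(θ,z) := 𝔼_{D∼π^n}[p_D(θ)] and the H₁ density L₁(θ,z) := 𝔼_{D'∼π^{n−1}}[p_{D'∪z}(θ)] (both with respect to μ ⊗ π). Then for every θ ∈ Θ and z ∈ Z with 𝔼_{D'∼π^{n−1}}[p_{D'}(θ)] > 0, the likelihood ratio satisfies L₀(θ,z)/L₁(θ,z) ≤ exp(ℓ(θ,z)/T) · 𝔼_{D∼π^n}[p_D(θ)] / 𝔼_{D'∼π^{n−1}}[p_{D'}(θ)]. -/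

import Mathlib

/-!
Appending the record `z` to `D'` multiplies the Gibbs weight `exp(-Σ ℓ/T)` by
`exp(-ℓ(θ,z)/T)`, while, as `ℓ ≥ 0`, it can only shrink the normalizing constant. Hence
`exp(-ℓ(θ,z)/T) p_{D'}(θ) ≤ p_{D'∪z}(θ)` for every `D'`; integrating over `D'` bounds the
H₁ density from below by `exp(-ℓ(θ,z)/T) 𝔼[p_{D'}(θ)]`, which is the claim.
-/

open MeasureTheory

/-- The Gibbs posterior density (w.r.t. `μ`) of the model trained on the finite
dataset `D : Fin m → Z` with per-record loss `ℓ` and temperature `T`: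
`p_D(θ) = exp(−(Σ_i ℓ(θ, D i))/T) / ∫ exp(−(Σ_i ℓ(θ', D i))/T) dμ(θ')`. -/
noncomputable def gibbsDensity {Θ Z : Type*} [MeasurableSpace Θ]
    (μ : MeasureTheory.Measure Θ) (T : ℝ) (ℓ : Θ → Z → ℝ)
    {m : ℕ} (D : Fin m → Z) (θ : Θ) : ℝ :=
  Real.exp (-(∑ i, ℓ θ (D i)) / T) /
    ∫ θ', Real.exp (-(∑ i, ℓ θ' (D i)) / T) ∂μ

noncomputable def gibbsWeight {Θ Z : Type*} (T : ℝ) (ℓ : Θ → Z → ℝ) {m : ℕ} (D : Fin m → Z)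
    (θ : Θ) : ℝ :=
  Real.exp (-(∑ i, ℓ θ (D i)) / T)

section Gibbs

variable {Θ Z : Type*} {T : ℝ} {ℓ : Θ → Z → ℝ} {m : ℕ}

lemma gibbsWeight_snoc (D : Fin m → Z) (z : Z) (θ : Θ) :
    gibbsWeight T ℓ (Fin.snoc D z) θ = Real.exp (-(ℓ θ z / T)) * gibbsWeight T ℓ D θ := by
  simp only [gibbsWeight, Fin.sum_univ_castSucc, Fin.snoc_castSucc, Fin.snoc_last,
    ← Real.exp_add]
  ring_nf

lemma exp_neg_div_le_one {x : ℝ} (hx : 0 ≤ x) (hT : 0 ≤ T) : Real.exp (-(x / T)) ≤ 1 :=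
  Real.exp_le_one_iff.mpr (neg_nonpos.mpr (div_nonneg hx hT))

variable {z : Z}

lemma gibbsWeight_snoc_le (hT : 0 ≤ T) (hℓ0 : ∀ θ, 0 ≤ ℓ θ z) (D : Fin m → Z) (θ : Θ) :
    gibbsWeight T ℓ (Fin.snoc D z) θ ≤ gibbsWeight T ℓ D θ := by
  rw [gibbsWeight_snoc]
  exact mul_le_of_le_one_left (Real.exp_nonneg _) (exp_neg_div_le_one (hℓ0 θ) hT)

variable [MeasurableSpace Θ] {μ : Measure Θ}

lemma gibbsDensity_eq_div (D : Fin m → Z) (θ : Θ) :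
    gibbsDensity μ T ℓ D θ = gibbsWeight T ℓ D θ / ∫ θ', gibbsWeight T ℓ D θ' ∂μ :=
  rfl

lemma gibbsDensity_nonneg (D : Fin m → Z) (θ : Θ) : 0 ≤ gibbsDensity μ T ℓ D θ :=
  div_nonneg (Real.exp_nonneg _) (integral_nonneg fun _ => Real.exp_nonneg _)

lemma gibbsDensity_zero_measure (D : Fin m → Z) (θ : Θ) :
    gibbsDensity (0 : Measure Θ) T ℓ D θ = 0 := by
  simp [gibbsDensity]

lemma integrable_gibbsWeight_snoc (hT : 0 ≤ T) (hℓz : Measurable fun θ => ℓ θ z)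
    (hℓ0 : ∀ θ, 0 ≤ ℓ θ z) {D : Fin m → Z} (hD : Integrable (gibbsWeight T ℓ D) μ) :
    Integrable (gibbsWeight T ℓ (Fin.snoc D z)) μ := by
  rw [funext (gibbsWeight_snoc (T := T) (ℓ := ℓ) D z)]
  refine hD.bdd_mul (c := 1) (by fun_prop) (ae_of_all _ fun θ => ?_)
  rw [Real.norm_of_nonneg (Real.exp_nonneg _)]
  exact exp_neg_div_le_one (hℓ0 θ) hT

lemma exp_neg_mul_gibbsDensity_le_gibbsDensity_snoc [NeZero μ] (hT : 0 ≤ T)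
    (hℓz : Measurable fun θ => ℓ θ z) (hℓ0 : ∀ θ, 0 ≤ ℓ θ z) (D : Fin m → Z) (θ : Θ) :
    Real.exp (-(ℓ θ z / T)) * gibbsDensity μ T ℓ D θ ≤ gibbsDensity μ T ℓ (Fin.snoc D z) θ := by
  by_cases hD : Integrable (gibbsWeight T ℓ D) μ
  · have hDz := integrable_gibbsWeight_snoc hT hℓz hℓ0 hD
    rw [gibbsDensity_eq_div, gibbsDensity_eq_div, gibbsWeight_snoc, mul_div_assoc]
    refine mul_le_mul_of_nonneg_left ?_ (Real.exp_nonneg _)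
    exact div_le_div_of_nonneg_left (Real.exp_nonneg _) (integral_exp_pos hDz)
      (integral_mono hDz hD (gibbsWeight_snoc_le hT hℓ0 D))
  · -- the normalizer is then the junk value `0`, so `p_D = 0`
    rw [gibbsDensity_eq_div, integral_undef hD, div_zero, mul_zero]
    exact gibbsDensity_nonneg _ _

lemma exp_neg_mul_integral_gibbsDensity_le_integral_snoc [MeasurableSpace Z] [NeZero μ]
    (ν : Measure (Fin m → Z)) (hT : 0 ≤ T) (hℓz : Measurable fun θ => ℓ θ z)
    (hℓ0 : ∀ θ, 0 ≤ ℓ θ z) (θ : Θ)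
    (hint : Integrable (fun D => gibbsDensity μ T ℓ (Fin.snoc D z) θ) ν) :
    Real.exp (-(ℓ θ z / T)) * ∫ D, gibbsDensity μ T ℓ D θ ∂ν
      ≤ ∫ D, gibbsDensity μ T ℓ (Fin.snoc D z) θ ∂ν := by
  rw [← integral_const_mul]
  refine integral_mono_of_nonneg (ae_of_all _ fun D => ?_) hint (ae_of_all _ fun D => ?_)
  · exact mul_nonneg (Real.exp_nonneg _) (gibbsDensity_nonneg D θ)
  · exact exp_neg_mul_gibbsDensity_le_gibbsDensity_snoc hT hℓz hℓ0 D θ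

end Gibbs

theorem likelihood_ratio_le_general
    {Θ Z : Type*} [MeasurableSpace Θ] [MeasurableSpace Z]
    (μ : Measure Θ)
    (π : Measure Z)
    (T : ℝ) (hT : 0 < T)
    (ℓ : Θ → Z → ℝ) (hℓ : Measurable fun p : Θ × Z => ℓ p.1 p.2)
    (hℓ0 : ∀ θ z, 0 ≤ ℓ θ z)
    (m : ℕ) :
    ∀ (θ : Θ) (z : Z),
      0 < ∫ D', gibbsDensity μ T ℓ D' θ ∂(Measure.pi fun _ : Fin m => π) →
      (∫ D, gibbsDensity μ T ℓ D θ ∂(Measure.pi fun _ : Fin (m + 1) => π)) /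
          (∫ D', gibbsDensity μ T ℓ (Fin.snoc D' z) θ
            ∂(Measure.pi fun _ : Fin m => π))
        ≤ Real.exp (ℓ θ z / T) *
            (∫ D, gibbsDensity μ T ℓ D θ ∂(Measure.pi fun _ : Fin (m + 1) => π)) /
            (∫ D', gibbsDensity μ T ℓ D' θ ∂(Measure.pi fun _ : Fin m => π)) := by
  intro θ z hC
  set A := ∫ D, gibbsDensity μ T ℓ D θ ∂(Measure.pi fun _ : Fin (m + 1) => π)
  have hA : 0 ≤ A := integral_nonneg fun D => gibbsDensity_nonneg D θ
  have : NeZero μ := ⟨by rintro rfl; simp [gibbsDensity_zero_measure] at hC⟩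
  by_cases hint : Integrable (fun D' => gibbsDensity μ T ℓ (Fin.snoc D' z) θ)
    (Measure.pi fun _ : Fin m => π)
  · have hℓz : Measurable fun θ => ℓ θ z := hℓ.comp (measurable_id.prodMk measurable_const)
    have hlower := exp_neg_mul_integral_gibbsDensity_le_integral_snoc
      (Measure.pi fun _ : Fin m => π) hT.le hℓz (hℓ0 · z) θ hint
    calc A / _ ≤ A / (Real.exp (-(ℓ θ z / T)) * _) :=
          div_le_div_of_nonneg_left hA (by positivity) hlower
      _ = _ := by rw [Real.exp_neg]; field_simp
  · rw [integral_undef hint, div_zero]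
    exact div_nonneg (mul_nonneg (Real.exp_nonneg _) hA) hC.le

/-- The rigorous likelihood-ratio bound in the proof of the approximated LRT
(Lemma 1): with `n = m + 1`, `L₀(θ,z) = 𝔼_{D∼π^n}[p_D(θ)]` the H₀ density and
`L₁(θ,z) = 𝔼_{D'∼π^{n−1}}[p_{D'∪z}(θ)]` the H₁ density (both w.r.t. `μ ⊗ π`),
for every `θ` and `z` with `𝔼_{D'∼π^{n−1}}[p_{D'}(θ)] > 0` we have
`L₀(θ,z)/L₁(θ,z) ≤ exp(ℓ(θ,z)/T) · 𝔼_{D∼π^n}[p_D(θ)] / 𝔼_{D'∼π^{n−1}}[p_{D'}(θ)]`. -/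
theorem likelihood_ratio_le
    {Θ Z : Type*} [MeasurableSpace Θ] [MeasurableSpace Z]
    (μ : Measure Θ) [SigmaFinite μ]
    (π : Measure Z) [IsProbabilityMeasure π]
    (T : ℝ) (hT : 0 < T)
    (ℓ : Θ → Z → ℝ) (hℓ : Measurable fun p : Θ × Z => ℓ p.1 p.2)
    (hℓ0 : ∀ θ z, 0 ≤ ℓ θ z)
    (m : ℕ)
    (hwell : ∀ k : ℕ, ∀ᵐ D ∂(Measure.pi fun _ : Fin k => π),
      Integrable (fun θ => Real.exp (-(∑ i, ℓ θ (D i)) / T)) μ ∧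
      0 < ∫ θ, Real.exp (-(∑ i, ℓ θ (D i)) / T) ∂μ) :
    ∀ (θ : Θ) (z : Z),
      0 < ∫ D', gibbsDensity μ T ℓ D' θ ∂(Measure.pi fun _ : Fin m => π) →
      (∫ D, gibbsDensity μ T ℓ D θ ∂(Measure.pi fun _ : Fin (m + 1) => π)) /
          (∫ D', gibbsDensity μ T ℓ (Fin.snoc D' z) θ
            ∂(Measure.pi fun _ : Fin m => π))
        ≤ Real.exp (ℓ θ z / T) *
            (∫ D, gibbsDensity μ T ℓ D θ ∂(Measure.pi fun _ : Fin (m + 1) => π)) /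
            (∫ D', gibbsDensity μ T ℓ D' θ ∂(Measure.pi fun _ : Fin m => π)) :=
  likelihood_ratio_le_general μ π T hT ℓ hℓ hℓ0 m
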